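/- arXiv:1903.02143 — 7 statements merged into one kernel-verified Lean document; each statement's English description precedes it below -/
import Mathlib

section
/- (Independence of shadows, Lemma of Section 3 of the paper.) Let X be a topological space equipped with a transitive binary relation ≪ whose future sets I⁺(z) are open. If (x_i) and (u_i) are both future directed sequences converging to the same point x ∈ X, then ⋂_i I⁺(x_i) = ⋂_i I⁺(u_i). -/
lemma subset_aux {X : Type*} [TopologicalSpace X] (r : X → X → Prop)
    (htrans : ∀ a b c : X, r a b → r b c → r a c)
    (hopenFut : ∀ z : X, IsOpen {w : X | r z w})
    (x : X) (xs us : ℕ → X)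
    (hxs_lt : ∀ i, r (xs i) x)
    (hus_tendsto : Filter.Tendsto us Filter.atTop (nhds x)) :
    (⋂ i, {w : X | r (us i) w}) ⊆ ⋂ i, {w : X | r (xs i) w} := by
  intro w hw
  simp only [Set.mem_iInter, Set.mem_setOf_eq] at hw ⊢
  intro i
  have hx : x ∈ {w : X | r (xs i) w} := hxs_lt i
  have := hus_tendsto ((hopenFut (xs i)).mem_nhds hx)
  rcases (Filter.eventually_atTop.mp this) with ⟨j, hj⟩
  exact htrans _ _ _ (hj j le_rfl) (hw j)

/-- Independence of shadows: two future directed sequences converging to the same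
point have the same intersection of chronological futures. -/
theorem stmt_1 {X : Type*} [TopologicalSpace X] (r : X → X → Prop)
    (htrans : ∀ a b c : X, r a b → r b c → r a c)
    (hopenFut : ∀ z : X, IsOpen {w : X | r z w})
    (x : X) (xs us : ℕ → X)
    (hxs_chain : ∀ i, r (xs i) (xs (i + 1))) (hxs_lt : ∀ i, r (xs i) x)
    (hxs_tendsto : Filter.Tendsto xs Filter.atTop (nhds x))
    (hus_chain : ∀ i, r (us i) (us (i + 1))) (hus_lt : ∀ i, r (us i) x)
    (hus_tendsto : Filter.Tendsto us Filter.atTop (nhds x)) :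
    (⋂ i, {w : X | r (xs i) w}) = ⋂ i, {w : X | r (us i) w} := by
  apply Set.Subset.antisymm
  · exact subset_aux r htrans hopenFut x us xs hus_lt hxs_tendsto
  · exact subset_aux r htrans hopenFut x xs us hxs_lt hus_tendsto
end

section
/- (Abstract form of the paper's Proposition: 'the set-valued function I⁺ is outer continuous if and only if for all x ∈ M, Miss⁺(x) = ∅'.) Under the stated assumptions on X and ≪, the set-valued map I⁺ is outer continuous if and only if Miss⁺(x) = ∅ for every x ∈ X. -/
open Filter

/-- A future directed sequence converging to `x`. -/
def FutureSeq {X : Type*} [TopologicalSpace X] (r : X → X → Prop) (xs : ℕ → X) (x : X) : Prop :=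
  (∀ i, r (xs i) (xs (i + 1))) ∧ (∀ i, r (xs i) x) ∧ Tendsto xs atTop (nhds x)

/-- `Miss⁺(x)` computed using the future directed sequence `xs` converging to `x`. -/
def MissPlus {X : Type*} [TopologicalSpace X] (r : X → X → Prop) (xs : ℕ → X) (x : X) : Set X :=
  interior ((⋂ i, {w : X | r (xs i) w}) \ {w : X | r x w})

/-- Outer continuity of the set-valued map `I⁺`. -/
def OuterCts {X : Type*} [TopologicalSpace X] (r : X → X → Prop) : Prop :=
  ∀ x : X, ∀ K : Set X, IsCompact K → K ⊆ (closure {w : X | r x w})ᶜ →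
    ∃ U : Set X, IsOpen U ∧ x ∈ U ∧ ∀ y ∈ U, closure {w : X | r y w} ∩ K = ∅

/-- `I⁺` is outer continuous iff `Miss⁺(x) = ∅` for every `x`. -/
theorem stmt_2 {X : Type*} [TopologicalSpace X] [T2Space X] [LocallyCompactSpace X]
    [FirstCountableTopology X]
    (r : X → X → Prop)
    (htrans : ∀ a b c : X, r a b → r b c → r a c)
    (hopenFut : ∀ z : X, IsOpen {w : X | r z w})
    (hopenPast : ∀ z : X, IsOpen {w : X | r w z})
    (hseq : ∀ x : X, ∃ xs : ℕ → X, FutureSeq r xs x)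
    (hmeet : ∀ z : X, ∀ U ∈ nhds z, ∃ w ∈ U, r z w) :
    OuterCts r ↔ ∀ (x : X) (xs : ℕ → X), FutureSeq r xs x → MissPlus r xs x = ∅ := by
  constructor
  · -- outer continuity ⇒ Miss⁺ empty
    intro hoc x xs hxs
    by_contra hne
    obtain ⟨p, hp⟩ := Set.nonempty_iff_ne_empty.mpr hne
    have hpmem : p ∈ (⋂ i, {w : X | r (xs i) w}) \ {w : X | r x w} := interior_subset hp
    -- p is not in the closure of I⁺(x), since MissPlus is an open neighbourhood of p
    -- disjoint from I⁺(x)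
    have hpnc : p ∉ closure {w : X | r x w} := by
      intro hc
      obtain ⟨q, hq1, hq2⟩ := mem_closure_iff.mp hc _ isOpen_interior hp
      exact (interior_subset hq1).2 hq2
    obtain ⟨U, hUo, hxU, hU⟩ := hoc x {p} isCompact_singleton (by
      intro q hq
      simp only [Set.mem_singleton_iff] at hq
      subst hq
      exact hpnc)
    have hev : ∀ᶠ i in atTop, xs i ∈ U := hxs.2.2 (hUo.mem_nhds hxU)
    obtain ⟨i, hi⟩ := hev.exists
    have h1 : p ∈ closure {w : X | r (xs i) w} :=
      subset_closure (Set.mem_iInter.mp hpmem.1 i)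
    have := hU (xs i) hi
    have : p ∈ closure {w : X | r (xs i) w} ∩ {p} := ⟨h1, rfl⟩
    rw [hU (xs i) hi] at this
    exact this
  · -- Miss⁺ empty ⇒ outer continuity
    intro hmiss x K hK hKsub
    by_contra hno
    push_neg at hno
    obtain ⟨B, hB⟩ := (nhds x).exists_antitone_basis
    have hsel : ∀ n : ℕ, ∃ y, y ∈ interior (B n) ∧ (closure {w : X | r y w} ∩ K).Nonempty := by
      intro n
      obtain ⟨y, hy, hne⟩ := hno (interior (B n)) isOpen_interior
        (mem_interior_iff_mem_nhds.mpr (hB.1.mem_of_mem trivial))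
      exact ⟨y, hy, hne⟩
    choose y hy hne using hsel
    choose k hk using hne
    have hytend : Tendsto y atTop (nhds x) :=
      hB.tendsto fun n => interior_subset (hy n)
    obtain ⟨c, hcK, φ, hφ, htend⟩ := hK.tendsto_subseq (fun n => (hk n).2)
    obtain ⟨xs, hxs⟩ := hseq x
    -- c lies in the closure of every I⁺(xs i)
    have hc : ∀ i, c ∈ closure {w : X | r (xs i) w} := by
      intro i
      have hev : ∀ᶠ n in atTop, y (φ n) ∈ {w : X | r (xs i) w} :=
        (hytend.comp hφ.tendsto_atTop) ((hopenFut (xs i)).mem_nhds (hxs.2.1 i))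
      have hev2 : ∀ᶠ n in atTop, (fun n => k (φ n)) n ∈ closure {w : X | r (xs i) w} := by
        filter_upwards [hev] with n hn
        have hsub : {w : X | r (y (φ n)) w} ⊆ {w : X | r (xs i) w} :=
          fun w hw => htrans _ _ _ hn hw
        exact closure_mono hsub (hk (φ n)).1
      exact isClosed_closure.mem_of_tendsto htend hev2
    -- c avoids closure of I⁺(x)
    have hcnc : c ∉ closure {w : X | r x w} := hKsub hcK
    -- pick w in I⁺(c) avoiding closure I⁺(x)
    obtain ⟨w, hw1, hw2⟩ := hmeet c ((closure {w : X | r x w})ᶜ)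
      ((isClosed_closure.isOpen_compl).mem_nhds hcnc)
    -- the open set I⁺(c) ∩ (closure I⁺(x))ᶜ is inside Miss⁺(x)
    have hsub : {v : X | r c v} ∩ (closure {w : X | r x w})ᶜ ⊆
        (⋂ i, {w : X | r (xs i) w}) \ {w : X | r x w} := by
      rintro v ⟨hv1, hv2⟩
      constructor
      · apply Set.mem_iInter.mpr
        intro i
        obtain ⟨q, hq1, hq2⟩ := mem_closure_iff.mp (hc i) {u : X | r u v}
          (hopenPast v) hv1
        exact htrans _ _ _ hq2 hq1
      · exact fun h => hv2 (subset_closure h)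
    have hwmiss : w ∈ MissPlus r xs x := by
      apply mem_interior.mpr
      exact ⟨_, hsub, (hopenFut c).inter isClosed_closure.isOpen_compl, ⟨hw2, hw1⟩⟩
    rw [hmiss x xs hxs] at hwmiss
    exact hwmiss
end

section
/- (Abstract form of the paper's Proposition: 'if there exists x with Miss⁺(x) ≠ ∅ then the Lorentzian distance is discontinuous'.) Under the stated assumptions on X, ≪ and d, if there exists x ∈ X with Miss⁺(x) ≠ ∅, then there exists v ∈ Miss⁺(x) such that the function d : X × X → [0,∞] is not continuous at the point (x, v); in particular d is not continuous. -/
open Filter ENNReal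

/-- If `Miss⁺(x) ≠ ∅` then the Lorentzian distance is discontinuous at some `(x, v)`
with `v ∈ Miss⁺(x)`; in particular `d` is not continuous. -/
theorem stmt_3 {X : Type*} [TopologicalSpace X]
    (r : X → X → Prop)
    (htrans : ∀ a b c : X, r a b → r b c → r a c)
    (hopenFut : ∀ z : X, IsOpen {w : X | r z w})
    (hopenPast : ∀ z : X, IsOpen {w : X | r w z})
    (hseq : ∀ x : X, ∃ xs : ℕ → X, FutureSeq r xs x)
    (d : X → X → ℝ≥0∞)
    (hd_zero : ∀ u v : X, ¬ r u v → d u v = 0)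
    (hd_pos : ∀ u v : X, r u v → 0 < d u v)
    (hd_revtri : ∀ u v w : X, r u v → r v w → d u v + d v w ≤ d u w)
    (hchron_dense : ∀ U : Set X, IsOpen U → U.Nonempty → ∃ u ∈ U, ∃ v ∈ U, r u v)
    (x : X) (xs : ℕ → X) (hxs : FutureSeq r xs x)
    (hne : (MissPlus r xs x).Nonempty) :
    (∃ v ∈ MissPlus r xs x, ¬ ContinuousAt (fun p : X × X => d p.1 p.2) (x, v)) ∧
      ¬ Continuous (fun p : X × X => d p.1 p.2) := by
  obtain ⟨u, hu, v, hv, huv⟩ := hchron_dense _ isOpen_interior hne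
  have hsub : MissPlus r xs x ⊆ (⋂ i, {w | r (xs i) w}) \ {w | r x w} := interior_subset
  have hru : ∀ i, r (xs i) u := fun i => Set.mem_iInter.mp (hsub hu).1 i
  have hnxv : ¬ r x v := (hsub hv).2
  have hdxv : d x v = 0 := hd_zero _ _ hnxv
  have hεpos : 0 < d u v := hd_pos _ _ huv
  have hbound : ∀ i, d u v ≤ d (xs i) v := fun i =>
    le_trans le_add_self (hd_revtri _ _ _ (hru i) huv)
  have key : ¬ ContinuousAt (fun p : X × X => d p.1 p.2) (x, v) := by
    intro hcont
    have htend : Tendsto (fun i => ((xs i, v) : X × X)) atTop (nhds (x, v)) :=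
      hxs.2.2.prodMk_nhds tendsto_const_nhds
    have h2 : Tendsto (fun i => d (xs i) v) atTop (nhds (d x v)) := hcont.tendsto.comp htend
    rw [hdxv] at h2
    obtain ⟨i, hi⟩ := (h2.eventually (Iio_mem_nhds hεpos)).exists
    exact absurd (hbound i) (not_le.mpr hi)
  exact ⟨⟨v, hv, key⟩, fun hc => key (hc.continuousAt)⟩
end

section
/- (Abstract form of the paper's Theorem 'if the Lorentzian distance is continuous then the manifold is causally continuous', i.e. Theorem 4.24 of Beem–Ehrlich–Easley as reproved in the paper.) Under the stated assumptions on X, ≪ and d, if the function d : X × X → [0,∞] is continuous, then Miss⁺(x) = ∅ for every x ∈ X and the set-valued map I⁺ is outer continuous. -/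
open Filter ENNReal Topology

/-!
By the reverse triangle inequality, `d w w' ≤ d y w'` for every `y ≪ w`, and by continuity of
`d` in its first argument this persists on the closure of `I⁻(w)`. Since `d w w' > 0` when
`w ≪ w'`, every point of `closure I⁻(w)` lies in `I⁻(w')`.

If `u ≪ v` both lay in `Miss⁺(x)`, then `x = lim xᵢ` with `xᵢ ≪ u` would satisfy `x ≪ v`,
which is impossible. For outer continuity, a point `a ∉ closure I⁺(x)` has `a ≪ w ≪ w'` with
`w, w'` still outside `closure I⁺(x)`, so `x ∉ closure I⁻(w)`; then no `y` near `x` has a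
closed future meeting the neighbourhood `I⁻(w)` of `a`, and compactness of `K` makes this
uniform.
-/

section Chronology

variable {X : Type*} [TopologicalSpace X] {r : X → X → Prop}

theorem rel_of_mem_closure_past {d : X → X → ℝ≥0∞}
    (hd_zero : ∀ u v : X, ¬ r u v → d u v = 0)
    (hd_pos : ∀ u v : X, r u v → 0 < d u v)
    (hd_revtri : ∀ u v w : X, r u v → r v w → d u v + d v w ≤ d u w)
    (hd_cont : ∀ w' : X, Continuous fun y => d y w')
    {x w w' : X} (hww' : r w w') (hx : x ∈ closure {y | r y w}) : r x w' := by
  have hclosed : IsClosed {y | d w w' ≤ d y w'} := isClosed_le continuous_const (hd_cont w')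
  have hle : d w w' ≤ d x w' :=
    closure_minimal (fun y hyw => le_add_self.trans (hd_revtri _ _ _ hyw hww')) hclosed hx
  by_contra hxw'
  rw [hd_zero _ _ hxw', nonpos_iff_eq_zero] at hle
  exact (hd_pos _ _ hww').ne' hle

theorem rel_of_mem_closure_future_of_rel
    (htrans : ∀ a b c : X, r a b → r b c → r a c)
    (hopenPast : ∀ z : X, IsOpen {w : X | r w z})
    {y b w : X} (hb : b ∈ closure {q | r y q}) (hbw : r b w) : r y w := by
  obtain ⟨q, hqw, hyq⟩ := mem_closure_iff.1 hb _ (hopenPast w) hbw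
  exact htrans _ _ _ hyq hqw

theorem missPlus_eq_empty {d : X → X → ℝ≥0∞}
    (hd_zero : ∀ u v : X, ¬ r u v → d u v = 0)
    (hd_pos : ∀ u v : X, r u v → 0 < d u v)
    (hd_revtri : ∀ u v w : X, r u v → r v w → d u v + d v w ≤ d u w)
    (hd_cont : ∀ w' : X, Continuous fun y => d y w')
    (hchron_dense : ∀ U : Set X, IsOpen U → U.Nonempty → ∃ u ∈ U, ∃ v ∈ U, r u v)
    {x : X} {xs : ℕ → X} (hxs : Tendsto xs atTop (𝓝 x)) : MissPlus r xs x = ∅ := by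
  by_contra hne
  obtain ⟨u, hu, v, hv, huv⟩ :=
    hchron_dense _ isOpen_interior (Set.nonempty_iff_ne_empty.2 hne)
  have hxu : x ∈ closure {y | r y u} :=
    mem_closure_of_tendsto hxs (Eventually.of_forall fun i =>
      Set.mem_iInter.1 (interior_subset hu).1 i)
  exact (interior_subset hv).2 (rel_of_mem_closure_past hd_zero hd_pos hd_revtri hd_cont huv hxu)

theorem eventually_notMem_closure_future {d : X → X → ℝ≥0∞}
    (htrans : ∀ a b c : X, r a b → r b c → r a c)
    (hopenPast : ∀ z : X, IsOpen {w : X | r w z})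
    (hmeet : ∀ z : X, ∀ U ∈ 𝓝 z, ∃ w ∈ U, r z w)
    (hd_zero : ∀ u v : X, ¬ r u v → d u v = 0)
    (hd_pos : ∀ u v : X, r u v → 0 < d u v)
    (hd_revtri : ∀ u v w : X, r u v → r v w → d u v + d v w ≤ d u w)
    (hd_cont : ∀ w' : X, Continuous fun y => d y w')
    {x a : X} (ha : a ∉ closure {w | r x w}) :
    ∀ᶠ p : X × X in 𝓝 (x, a), p.2 ∉ closure {w | r p.1 w} := by
  have hV : (closure {w | r x w})ᶜ ∈ 𝓝 a := isClosed_closure.isOpen_compl.mem_nhds ha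
  obtain ⟨w, hwV, haw⟩ := hmeet a _ hV
  obtain ⟨w', hw'V, hww'⟩ :=
    hmeet w _ (isClosed_closure.isOpen_compl.mem_nhds hwV)
  have hx : x ∉ closure {y | r y w} := fun hx =>
    hw'V (subset_closure (rel_of_mem_closure_past hd_zero hd_pos hd_revtri hd_cont hww' hx))
  filter_upwards [prod_mem_nhds (isClosed_closure.isOpen_compl.mem_nhds hx)
    ((hopenPast w).mem_nhds haw)] with ⟨y, b⟩ ⟨hy, hbw⟩ hb
  exact hy (subset_closure (rel_of_mem_closure_future_of_rel htrans hopenPast hb hbw))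

theorem outerCts_of_continuous_dist {d : X → X → ℝ≥0∞}
    (htrans : ∀ a b c : X, r a b → r b c → r a c)
    (hopenPast : ∀ z : X, IsOpen {w : X | r w z})
    (hmeet : ∀ z : X, ∀ U ∈ 𝓝 z, ∃ w ∈ U, r z w)
    (hd_zero : ∀ u v : X, ¬ r u v → d u v = 0)
    (hd_pos : ∀ u v : X, r u v → 0 < d u v)
    (hd_revtri : ∀ u v w : X, r u v → r v w → d u v + d v w ≤ d u w)
    (hd_cont : ∀ w' : X, Continuous fun y => d y w') : OuterCts r := by
  intro x K hK hKsub
  obtain ⟨U, hU, hUo, hxU⟩ := eventually_nhds_iff.1 <|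
    hK.eventually_forall_of_forall_eventually (P := fun y b => b ∉ closure {w | r y w})
      fun a ha => eventually_notMem_closure_future htrans hopenPast hmeet hd_zero hd_pos
        hd_revtri hd_cont (hKsub ha)
  exact ⟨U, hUo, hxU, fun y hy => Set.eq_empty_of_forall_notMem fun b hb => hU y hy b hb.2 hb.1⟩

end Chronology

theorem stmt_4_general {X : Type*} [TopologicalSpace X]
    (r : X → X → Prop)
    (htrans : ∀ a b c : X, r a b → r b c → r a c)
    (hopenPast : ∀ z : X, IsOpen {w : X | r w z})
    (hmeet : ∀ z : X, ∀ U ∈ nhds z, ∃ w ∈ U, r z w)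
    (d : X → X → ℝ≥0∞)
    (hd_zero : ∀ u v : X, ¬ r u v → d u v = 0)
    (hd_pos : ∀ u v : X, r u v → 0 < d u v)
    (hd_revtri : ∀ u v w : X, r u v → r v w → d u v + d v w ≤ d u w)
    (hchron_dense : ∀ U : Set X, IsOpen U → U.Nonempty → ∃ u ∈ U, ∃ v ∈ U, r u v)
    (hd_cont : Continuous (fun p : X × X => d p.1 p.2)) :
    (∀ (x : X) (xs : ℕ → X), FutureSeq r xs x → MissPlus r xs x = ∅) ∧ OuterCts r := by
  have hd_cont_left : ∀ w' : X, Continuous fun y => d y w' := fun w' =>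
    hd_cont.comp (Continuous.prodMk_left w')
  exact ⟨fun _ _ hxs =>
      missPlus_eq_empty hd_zero hd_pos hd_revtri hd_cont_left hchron_dense hxs.2.2,
    outerCts_of_continuous_dist htrans hopenPast hmeet hd_zero hd_pos hd_revtri hd_cont_left⟩

/-- If the Lorentzian distance is continuous then `Miss⁺(x) = ∅` for all `x` and
`I⁺` is outer continuous (abstract form of Theorem 4.24 of Beem--Ehrlich--Easley). -/
theorem stmt_4 {X : Type*} [TopologicalSpace X] [T2Space X] [LocallyCompactSpace X]
    [FirstCountableTopology X]
    (r : X → X → Prop)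
    (htrans : ∀ a b c : X, r a b → r b c → r a c)
    (hopenFut : ∀ z : X, IsOpen {w : X | r z w})
    (hopenPast : ∀ z : X, IsOpen {w : X | r w z})
    (hseq : ∀ x : X, ∃ xs : ℕ → X, FutureSeq r xs x)
    (hmeet : ∀ z : X, ∀ U ∈ nhds z, ∃ w ∈ U, r z w)
    (d : X → X → ℝ≥0∞)
    (hd_zero : ∀ u v : X, ¬ r u v → d u v = 0)
    (hd_pos : ∀ u v : X, r u v → 0 < d u v)
    (hd_revtri : ∀ u v w : X, r u v → r v w → d u v + d v w ≤ d u w)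
    (hchron_dense : ∀ U : Set X, IsOpen U → U.Nonempty → ∃ u ∈ U, ∃ v ∈ U, r u v)
    (hd_cont : Continuous (fun p : X × X => d p.1 p.2)) :
    (∀ (x : X) (xs : ℕ → X), FutureSeq r xs x → MissPlus r xs x = ∅) ∧ OuterCts r :=
  stmt_4_general r htrans hopenPast hmeet d hd_zero hd_pos hd_revtri hchron_dense hd_cont
end

section
/- (Limit curve lemma, Appendix of the paper.) Let (M, ρ) be a proper metric space (closed bounded subsets are compact) and let B ⊆ M be a bounded subset. For each i ∈ ℕ let b_i ∈ (0,∞], let I_i = [0, b_i] if b_i < ∞ and I_i = [0,∞) otherwise, and let γ_i : I_i → M be a curve satisfying ρ(γ_i(t₁), γ_i(t₂)) ≤ |t₁ − t₂| for all t₁, t₂ ∈ I_i. Suppose there is N ∈ ℕ such that the image of γ_n is contained in closure(B) for all n > N. Let b = sup_i b_i; if b = ∞ set Y_i = [0, b_i) and X = [0,∞), otherwise set Y_i = [0, b_i] and X = [0, b]. Then there exist strictly monotonically increasing, bijective, smooth changes of parameter f_i : X → Y_i and a subsequence of (γ_i ∘ f_i) that converges uniformly on compact subsets of X to a continuous curve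 γ : X → M whose image lies in closure(B). -/
open Set Filter
open scoped ENNReal

/-- The parameter domain `I = [0, c]` (if `c < ∞`) or `[0, ∞)` (if `c = ∞`). -/
def paramDom (c : ℝ≥0∞) : Set ℝ := {t : ℝ | 0 ≤ t ∧ ENNReal.ofReal t ≤ c}

/-- The common domain `X = [0, b]` if `b < ∞`, and `X = [0, ∞)` if `b = ∞`. -/
noncomputable def limDom (b : ℝ≥0∞) : Set ℝ :=
  if b = ⊤ then Set.Ici (0 : ℝ) else Set.Icc (0 : ℝ) b.toReal

/-- The reparametrised domain `Y_i`: it is `[0, b_i)` if `b = ∞`, and `[0, b_i]` otherwise. -/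
noncomputable def reparamDom (b c : ℝ≥0∞) : Set ℝ :=
  if b = ⊤ then {t : ℝ | 0 ≤ t ∧ ENNReal.ofReal t < c}
  else {t : ℝ | 0 ≤ t ∧ ENNReal.ofReal t ≤ c}

lemma limitcurve_key {M : Type*} [MetricSpace M] {K : Set M} (hK : IsCompact K)
    (h : ℕ → ℝ → M) (hlip : ∀ n, LipschitzWith 1 (h n)) (hmem : ∀ n t, h n t ∈ K) :
    ∃ (φ : ℕ → ℕ) (g : C(ℝ, M)), StrictMono φ ∧ (∀ t, g t ∈ K) ∧
      ∀ Kc : Set ℝ, IsCompact Kc →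
        TendstoUniformlyOn (fun n t => h (φ n) t) (⇑g) atTop Kc := by
  set S : Set C(ℝ, M) := {u | LipschitzWith 1 ⇑u ∧ ∀ t, u t ∈ K} with hSdef
  have hScompact : IsCompact S := by
    apply ArzelaAscoli.isCompact_of_equicontinuous
    · have himg : ContinuousMap.toFun '' S =
          {v : ℝ → M | LipschitzWith 1 v ∧ ∀ t, v t ∈ K} := by
        ext v
        constructor
        · rintro ⟨u, hu, rfl⟩; exact hu
        · rintro ⟨h1, h2⟩; exact ⟨⟨v, h1.continuous⟩, ⟨h1, h2⟩, rfl⟩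
      rw [himg]
      apply (isCompact_univ_pi fun _ : ℝ => hK).of_isClosed_subset
      · have : {v : ℝ → M | LipschitzWith 1 v ∧ ∀ t, v t ∈ K} =
            (⋂ (s : ℝ) (t : ℝ), {v : ℝ → M | dist (v s) (v t) ≤ dist s t}) ∩
            (⋂ t : ℝ, (fun v : ℝ → M => v t) ⁻¹' K) := by
          ext v
          simp only [mem_inter_iff, mem_iInter, mem_setOf_eq, mem_preimage]
          constructor
          · rintro ⟨h1, h2⟩
            exact ⟨fun s t => by simpa using h1.dist_le_mul s t, h2⟩
          · rintro ⟨h1, h2⟩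
            refine ⟨LipschitzWith.of_dist_le_mul fun s t => by simpa using h1 s t, h2⟩
        rw [this]
        apply IsClosed.inter
        · exact isClosed_iInter fun s => isClosed_iInter fun t =>
            isClosed_le (by continuity) continuous_const
        · exact isClosed_iInter fun t => hK.isClosed.preimage (continuous_apply t)
      · intro v hv
        simp only [mem_univ_pi]
        exact fun t => hv.2 t
    · intro x
      rw [Metric.equicontinuousAt_iff]
      intro ε hε
      refine ⟨ε, hε, fun y hy u => ?_⟩
      calc dist (u.1 x) (u.1 y) ≤ 1 * dist x y := u.2.1.dist_le_mul x y
      _ < ε := by rw [one_mul, dist_comm]; exact hy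
  have hmemS : ∀ n, (⟨h n, (hlip n).continuous⟩ : C(ℝ, M)) ∈ S :=
    fun n => ⟨hlip n, hmem n⟩
  obtain ⟨g, hgS, φ, hφ, hconv⟩ := hScompact.isSeqCompact hmemS
  refine ⟨φ, g, hφ, hgS.2, fun Kc hKc => ?_⟩
  rw [ContinuousMap.tendsto_iff_forall_isCompact_tendstoUniformlyOn] at hconv
  exact hconv Kc hKc

lemma limitcurve_assemble {M : Type*} [MetricSpace M] [ProperSpace M]
    (B : Set M) (hB : Bornology.IsBounded B)
    (bi : ℕ → ℝ≥0∞)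
    (γ : ℕ → ℝ → M)
    (hlip : ∀ i, ∀ t₁ ∈ paramDom (bi i), ∀ t₂ ∈ paramDom (bi i),
      dist (γ i t₁) (γ i t₂) ≤ |t₁ - t₂|)
    (N : ℕ) (hN : ∀ n > N, ∀ t ∈ paramDom (bi n), γ n t ∈ closure B)
    (b : ℝ≥0∞)
    (f : ℕ → ℝ → ℝ)
    (h1 : ∀ i, ContDiffOn ℝ (⊤ : ℕ∞) (f i) (limDom b))
    (h2 : ∀ i, StrictMonoOn (f i) (limDom b))
    (h3 : ∀ i, Set.BijOn (f i) (limDom b) (reparamDom b (bi i)))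
    (h4 : ∀ i s t, |f i s - f i t| ≤ |s - t|)
    (h5 : ∀ i t, f i t ∈ paramDom (bi i)) :
    ∃ (f : ℕ → ℝ → ℝ) (φ : ℕ → ℕ) (g : ℝ → M),
      StrictMono φ ∧
      (∀ i, ContDiffOn ℝ (⊤ : ℕ∞) (f i) (limDom b)) ∧
      (∀ i, StrictMonoOn (f i) (limDom b)) ∧
      (∀ i, Set.BijOn (f i) (limDom b) (reparamDom b (bi i))) ∧
      ContinuousOn g (limDom b) ∧
      (∀ t ∈ limDom b, g t ∈ closure B) ∧
      (∀ K : Set ℝ, K ⊆ limDom b → IsCompact K →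
        TendstoUniformlyOn (fun n t => γ (φ n) (f (φ n) t)) g atTop K) := by
  have hK : IsCompact (closure B) := hB.isCompact_closure
  have hlipH : ∀ n, LipschitzWith 1 (fun t => γ (n + (N + 1)) (f (n + (N + 1)) t)) := by
    intro n
    apply LipschitzWith.of_dist_le_mul
    intro s t
    calc dist (γ (n + (N + 1)) (f (n + (N + 1)) s)) (γ (n + (N + 1)) (f (n + (N + 1)) t))
        ≤ |f (n + (N + 1)) s - f (n + (N + 1)) t| :=
          hlip _ _ (h5 _ _) _ (h5 _ _)
      _ ≤ |s - t| := h4 _ _ _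
      _ = 1 * dist s t := by rw [one_mul, Real.dist_eq]
  have hmemH : ∀ n t, γ (n + (N + 1)) (f (n + (N + 1)) t) ∈ closure B :=
    fun n t => hN _ (by omega) _ (h5 _ _)
  obtain ⟨φ', g, hφ', hg, hconv⟩ := limitcurve_key hK _ hlipH hmemH
  refine ⟨f, fun n => φ' n + (N + 1), g, ?_, h1, h2, h3,
    g.continuous.continuousOn, fun t _ => hg t, ?_⟩
  · intro a c hac
    simpa using hφ' hac
  · intro Kc hsub hKc
    exact hconv Kc hKc

lemma exp_neg_lip {a b : ℝ} (ha : 0 ≤ a) (hb : 0 ≤ b) :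
    |Real.exp (-a) - Real.exp (-b)| ≤ |a - b| := by
  wlog hab : b ≤ a generalizing a b
  · rw [abs_sub_comm, abs_sub_comm a b]
    exact this hb ha (le_of_not_ge hab)
  have h1 : Real.exp (-a) ≤ Real.exp (-b) := Real.exp_le_exp.2 (by linarith)
  rw [abs_of_nonpos (by linarith), abs_of_nonneg (by linarith)]
  have hE : Real.exp (-b) * Real.exp (b - a) = Real.exp (-a) := by
    rw [← Real.exp_add]; ring_nf
  have h2 : (b - a) + 1 ≤ Real.exp (b - a) := Real.add_one_le_exp _
  have h3 : Real.exp (-b) ≤ 1 := Real.exp_le_one_iff.2 (by linarith)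
  have h4 : 0 < Real.exp (b - a) := Real.exp_pos _
  have h5 : (0:ℝ) ≤ Real.exp (-b) := (Real.exp_pos _).le
  nlinarith [mul_le_mul_of_nonneg_left h2 h5,
    mul_le_mul_of_nonneg_right h3 (sub_nonneg.2 hab)]


lemma limitcurve_f_fin (bi : ℕ → ℝ≥0∞) (hbi : ∀ i, 0 < bi i) (b : ℝ≥0∞) (hb : b = ⨆ i, bi i)
    (hbtop : b ≠ ⊤) :
    ∃ f : ℕ → ℝ → ℝ,
      (∀ i, ContDiffOn ℝ (⊤ : ℕ∞) (f i) (limDom b)) ∧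
      (∀ i, StrictMonoOn (f i) (limDom b)) ∧
      (∀ i, Set.BijOn (f i) (limDom b) (reparamDom b (bi i))) ∧
      (∀ i s t, |f i s - f i t| ≤ |s - t|) ∧
      (∀ i t, f i t ∈ paramDom (bi i)) := by
  set T := b.toReal with hT
  have hble : ∀ i, bi i ≤ b := fun i => hb ▸ le_iSup bi i
  have hbine : ∀ i, bi i ≠ ⊤ := fun i => ne_top_of_le_ne_top hbtop (hble i)
  set c : ℕ → ℝ := fun i => (bi i).toReal with hc
  have hcpos : ∀ i, 0 < c i := fun i => ENNReal.toReal_pos (hbi i).ne' (hbine i)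
  have hTpos : 0 < T := ENNReal.toReal_pos (lt_of_lt_of_le (hbi 0) (hble 0)).ne' hbtop
  have hcT : ∀ i, c i ≤ T := fun i =>
    (ENNReal.toReal_le_toReal (hbine i) hbtop).2 (hble i)
  set r : ℝ → ℝ := fun t => max 0 (min t T) with hr
  have hrmem : ∀ t, r t ∈ Icc 0 T := fun t =>
    ⟨le_max_left _ _, max_le (le_of_lt hTpos) (min_le_right _ _)⟩
  have hrid : ∀ t ∈ Icc (0:ℝ) T, r t = t := by
    intro t ht
    simp only [hr, min_eq_left ht.2, max_eq_right ht.1]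
  have hrlip : ∀ s t, |r s - r t| ≤ |s - t| := by
    intro s t
    calc |max 0 (min s T) - max 0 (min t T)| = |max (min s T) 0 - max (min t T) 0| := by
          rw [max_comm (0:ℝ), max_comm (0:ℝ)]
      _ ≤ |min s T - min t T| := abs_max_sub_max_le_abs _ _ _
      _ ≤ max |s - t| |T - T| := abs_min_sub_min_le_max _ _ _ _
      _ = |s - t| := by simp
  have hld : limDom b = Icc 0 T := by rw [limDom, if_neg hbtop]
  have hrd : ∀ i, reparamDom b (bi i) = Icc 0 (c i) := by
    intro i
    rw [reparamDom, if_neg hbtop]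
    ext t
    simp only [mem_setOf_eq, mem_Icc, ENNReal.ofReal_le_iff_le_toReal (hbine i)]
    exact Iff.rfl
  set f : ℕ → ℝ → ℝ := fun i t => (c i / T) * r t with hf
  have hfid : ∀ i, ∀ t ∈ Icc (0:ℝ) T, f i t = (c i / T) * t := by
    intro i t ht; simp only [hf, hrid t ht]
  have hratpos : ∀ i, 0 < c i / T := fun i => div_pos (hcpos i) hTpos
  have hfIcc : ∀ i t, f i t ∈ Icc 0 (c i) := by
    intro i t
    constructor
    · exact mul_nonneg (hratpos i).le (hrmem t).1
    · calc (c i / T) * r t ≤ (c i / T) * T :=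
            mul_le_mul_of_nonneg_left (hrmem t).2 (hratpos i).le
        _ = c i := by field_simp
  refine ⟨f, ?_, ?_, ?_, ?_, ?_⟩
  · intro i
    rw [hld]
    exact ((contDiff_const.mul contDiff_id).contDiffOn).congr fun t ht => by
      rw [hfid i t ht]; rfl
  · intro i
    rw [hld]
    intro s hs t ht hst
    rw [hfid i s hs, hfid i t ht]
    exact mul_lt_mul_of_pos_left hst (hratpos i)
  · intro i
    rw [hld, hrd i]
    refine ⟨fun t _ => hfIcc i t, ?_, ?_⟩
    · intro s hs t ht hfe
      rw [hfid i s hs, hfid i t ht] at hfe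
      exact mul_left_cancel₀ (hratpos i).ne' hfe
    · intro y hy
      have ht0 : y * T / c i ∈ Icc (0:ℝ) T := by
        constructor
        · exact div_nonneg (mul_nonneg hy.1 hTpos.le) (hcpos i).le
        · calc y * T / c i ≤ c i * T / c i := by
                apply div_le_div_of_nonneg_right ?_ (hcpos i).le
                exact mul_le_mul_of_nonneg_right hy.2 hTpos.le
            _ = T := mul_div_cancel_left₀ T (hcpos i).ne'
      refine ⟨y * T / c i, ht0, ?_⟩
      rw [hfid i _ ht0]
      have hT0 : T ≠ 0 := hTpos.ne'
      have hc0 : c i ≠ 0 := (hcpos i).ne'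
      field_simp
  · intro i s t
    calc |f i s - f i t| = (c i / T) * |r s - r t| := by
          rw [hf]; rw [← mul_sub, abs_mul, abs_of_pos (hratpos i)]
      _ ≤ 1 * |s - t| := by
          apply mul_le_mul ?_ (hrlip s t) (abs_nonneg _) zero_le_one
          rw [div_le_one hTpos]; exact hcT i
      _ = |s - t| := one_mul _
  · intro i t
    have := hfIcc i t
    exact ⟨this.1, (ENNReal.ofReal_le_iff_le_toReal (hbine i)).2 this.2⟩

lemma limitcurve_f_top (bi : ℕ → ℝ≥0∞) (hbi : ∀ i, 0 < bi i) (b : ℝ≥0∞)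
    (hbtop : b = ⊤) :
    ∃ f : ℕ → ℝ → ℝ,
      (∀ i, ContDiffOn ℝ (⊤ : ℕ∞) (f i) (limDom b)) ∧
      (∀ i, StrictMonoOn (f i) (limDom b)) ∧
      (∀ i, Set.BijOn (f i) (limDom b) (reparamDom b (bi i))) ∧
      (∀ i s t, |f i s - f i t| ≤ |s - t|) ∧
      (∀ i t, f i t ∈ paramDom (bi i)) := by
  set c : ℕ → ℝ := fun i => (bi i).toReal with hc
  set r : ℝ → ℝ := fun t => max t 0 with hr
  have hrmem : ∀ t, 0 ≤ r t := fun t => le_max_right _ _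
  have hrid : ∀ t : ℝ, 0 ≤ t → r t = t := fun t ht => max_eq_left ht
  have hrlip : ∀ s t, |r s - r t| ≤ |s - t| := fun s t => abs_max_sub_max_le_abs _ _ _
  have hld : limDom b = Ici 0 := by rw [limDom, if_pos hbtop]
  set f : ℕ → ℝ → ℝ := fun i t =>
    if bi i = ⊤ then r t else c i * (1 - Real.exp (-(r t) / c i)) with hf
  have hcpos : ∀ i, bi i ≠ ⊤ → 0 < c i := fun i h => ENNReal.toReal_pos (hbi i).ne' h
  have hrd : ∀ i, bi i ≠ ⊤ → reparamDom b (bi i) = Ico 0 (c i) := by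
    intro i h
    rw [reparamDom, if_pos hbtop]
    ext t
    simp only [mem_setOf_eq, mem_Ico]
    exact and_congr_right fun ht => ENNReal.ofReal_lt_iff_lt_toReal ht h
  have hrdtop : ∀ i, bi i = ⊤ → reparamDom b (bi i) = Ici 0 := by
    intro i h
    rw [reparamDom, if_pos hbtop, h]
    ext t
    simp [ENNReal.ofReal_lt_top]
  -- basic facts about the exp reparametrization
  have hfid : ∀ i, bi i ≠ ⊤ → ∀ t : ℝ, 0 ≤ t →
      f i t = c i * (1 - Real.exp (-t / c i)) := by
    intro i h t ht
    simp only [hf, if_neg h, hrid t ht]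
  have hfmem : ∀ i, bi i ≠ ⊤ → ∀ t : ℝ, f i t ∈ Ico 0 (c i) := by
    intro i h t
    have hci := hcpos i h
    simp only [hf, if_neg h]
    constructor
    · have : Real.exp (-(r t) / c i) ≤ 1 := by
        apply Real.exp_le_one_iff.2
        apply div_nonpos_of_nonpos_of_nonneg (by linarith [hrmem t]) hci.le
      nlinarith
    · have : 0 < Real.exp (-(r t) / c i) := Real.exp_pos _
      nlinarith
  refine ⟨f, ?_, ?_, ?_, ?_, ?_⟩
  · intro i
    rw [hld]
    by_cases h : bi i = ⊤
    · simp only [hf, if_pos h]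
      exact contDiffOn_id.congr fun t ht => hrid t ht
    · have : ContDiff ℝ (⊤ : ℕ∞) fun t : ℝ => c i * (1 - Real.exp (-t / c i)) := by
        apply contDiff_const.mul
        apply contDiff_const.sub
        exact Real.contDiff_exp.comp (contDiff_id.neg.div_const _)
      exact this.contDiffOn.congr fun t ht => hfid i h t ht
  · intro i
    rw [hld]
    intro s hs t ht hst
    by_cases h : bi i = ⊤
    · simp only [hf, if_pos h, hrid s hs, hrid t ht]; exact hst
    · have hci := hcpos i h
      rw [hfid i h s hs, hfid i h t ht]
      have : Real.exp (-t / c i) < Real.exp (-s / c i) := by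
        apply Real.exp_lt_exp.2
        exact (div_lt_div_iff_of_pos_right hci).2 (by linarith)
      nlinarith
  · intro i
    rw [hld]
    by_cases h : bi i = ⊤
    · rw [hrdtop i h]
      have : ∀ t ∈ Ici (0:ℝ), f i t = t := by
        intro t ht
        simp only [hf, if_pos h, hrid t ht]
      refine ⟨fun t ht => by rw [this t ht]; exact ht,
        fun s hs t ht he => by rwa [this s hs, this t ht] at he,
        fun y hy => ⟨y, hy, this y hy⟩⟩
    · have hci := hcpos i h
      rw [hrd i h]
      refine ⟨fun t _ => hfmem i h t, ?_, ?_⟩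
      · intro s hs t ht he
        rw [hfid i h s hs, hfid i h t ht] at he
        have h2 : Real.exp (-s / c i) = Real.exp (-t / c i) := by
          have h4 := mul_left_cancel₀ hci.ne' he
          linarith
        have h3 := Real.exp_injective h2
        field_simp at h3
        linarith
      · intro y hy
        set t0 : ℝ := c i * Real.log (c i / (c i - y)) with ht0def
        have hcy : 0 < c i - y := by linarith [hy.2]
        have hlog : 0 ≤ Real.log (c i / (c i - y)) := by
          apply Real.log_nonneg
          rw [le_div_iff₀ hcy]
          linarith [hy.1]
        have ht0 : 0 ≤ t0 := mul_nonneg hci.le hlog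
        refine ⟨t0, ht0, ?_⟩
        rw [hfid i h t0 ht0]
        have hexp : Real.exp (-t0 / c i) = (c i - y) / c i := by
          have : -t0 / c i = -Real.log (c i / (c i - y)) := by
            field_simp [ht0def]
            ring
          rw [this, Real.exp_neg, Real.exp_log (by positivity)]
          rw [inv_div]
        rw [hexp]
        field_simp
        ring
  · intro i s t
    by_cases h : bi i = ⊤
    · simp only [hf, if_pos h]
      exact hrlip s t
    · have hci := hcpos i h
      simp only [hf, if_neg h]
      have key : |Real.exp (-(r s) / c i) - Real.exp (-(r t) / c i)|
          ≤ |r s - r t| / c i := by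
        have := exp_neg_lip (a := r s / c i) (b := r t / c i)
          (div_nonneg (hrmem s) hci.le) (div_nonneg (hrmem t) hci.le)
        rw [div_sub_div_same, abs_div, abs_of_pos hci] at this
        simpa [neg_div] using this
      calc |c i * (1 - Real.exp (-(r s) / c i)) - c i * (1 - Real.exp (-(r t) / c i))|
          = c i * |Real.exp (-(r s) / c i) - Real.exp (-(r t) / c i)| := by
            rw [← mul_sub, abs_mul, abs_of_pos hci, abs_sub_comm]; ring_nf
        _ ≤ c i * (|r s - r t| / c i) := mul_le_mul_of_nonneg_left key hci.le
        _ = |r s - r t| := by field_simp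
        _ ≤ |s - t| := hrlip s t
  · intro i t
    by_cases h : bi i = ⊤
    · simp only [hf, if_pos h]
      exact ⟨hrmem t, h ▸ le_top⟩
    · have hm := hfmem i h t
      refine ⟨hm.1, ?_⟩
      exact ((ENNReal.ofReal_lt_iff_lt_toReal hm.1 h).2 hm.2).le

/-- Limit curve lemma: given distance-nonincreasing curves `γ i : [0, bᵢ] → M` (or
`[0, ∞) → M`) eventually contained in the closure of a bounded set `B` of a proper metric
space, there are smooth strictly monotonic bijective changes of parameter `f i : X → Yᵢ`
and a subsequence of `γ i ∘ f i` converging uniformly on compact subsets of `X` to a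
continuous curve `g` lying in `closure B`. -/
theorem stmt_5 {M : Type*} [MetricSpace M] [ProperSpace M]
    (B : Set M) (hB : Bornology.IsBounded B)
    (bi : ℕ → ℝ≥0∞) (hbi : ∀ i, 0 < bi i)
    (γ : ℕ → ℝ → M)
    (hlip : ∀ i, ∀ t₁ ∈ paramDom (bi i), ∀ t₂ ∈ paramDom (bi i),
      dist (γ i t₁) (γ i t₂) ≤ |t₁ - t₂|)
    (N : ℕ) (hN : ∀ n > N, ∀ t ∈ paramDom (bi n), γ n t ∈ closure B)
    (b : ℝ≥0∞) (hb : b = ⨆ i, bi i) :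
    ∃ (f : ℕ → ℝ → ℝ) (φ : ℕ → ℕ) (g : ℝ → M),
      StrictMono φ ∧
      (∀ i, ContDiffOn ℝ (⊤ : ℕ∞) (f i) (limDom b)) ∧
      (∀ i, StrictMonoOn (f i) (limDom b)) ∧
      (∀ i, Set.BijOn (f i) (limDom b) (reparamDom b (bi i))) ∧
      ContinuousOn g (limDom b) ∧
      (∀ t ∈ limDom b, g t ∈ closure B) ∧
      (∀ K : Set ℝ, K ⊆ limDom b → IsCompact K →
        TendstoUniformlyOn (fun n t => γ (φ n) (f (φ n) t)) g atTop K) := by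
  by_cases hbtop : b = ⊤
  · obtain ⟨f, h1, h2, h3, h4, h5⟩ := limitcurve_f_top bi hbi b hbtop
    exact limitcurve_assemble B hB bi γ hlip N hN b f h1 h2 h3 h4 h5
  · obtain ⟨f, h1, h2, h3, h4, h5⟩ := limitcurve_f_fin bi hbi b hb hbtop
    exact limitcurve_assemble B hB bi γ hlip N hN b f h1 h2 h3 h4 h5
end

section
/- (From Example 2.2 of the paper.) Let M = ℝ² ∖ {(1, t) : 1 ≤ t ≤ 2}, the Minkowski plane with a closed vertical segment removed. Then d_M((0,0), (0,4)) = 4. -/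
open Set
open scoped ENNReal

/-- A vector of the Minkowski plane (first coordinate space, second coordinate time)
is future-directed timelike. -/
def FDTimelike (v : ℝ × ℝ) : Prop := |v.1| < v.2

/-- A future-directed timelike curve in `M ⊆ ℝ²` from `p` to `q`: a piecewise `C¹`
map `γ : [0,1] → M` all of whose one-sided derivatives are future-directed timelike. -/
def IsTimelikeCurveIn (M : Set (ℝ × ℝ)) (γ : ℝ → ℝ × ℝ) (p q : ℝ × ℝ) : Prop :=
  γ 0 = p ∧ γ 1 = q ∧ (∀ s ∈ Set.Icc (0 : ℝ) 1, γ s ∈ M) ∧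
  ∃ (m : ℕ) (t : ℕ → ℝ), 0 < m ∧ t 0 = 0 ∧ t m = 1 ∧ (∀ j < m, t j < t (j + 1)) ∧
    ∀ j < m,
      ContDiffOn ℝ 1 γ (Set.Icc (t j) (t (j + 1))) ∧
      ∀ s ∈ Set.Icc (t j) (t (j + 1)),
        FDTimelike (derivWithin γ (Set.Icc (t j) (t (j + 1))) s)

/-- The Lorentzian length of a curve in the Minkowski plane. -/
noncomputable def Llen (γ : ℝ → ℝ × ℝ) : ℝ :=
  ∫ s in (0 : ℝ)..1, Real.sqrt ((deriv γ s).2 ^ 2 - (deriv γ s).1 ^ 2)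

/-- The Lorentzian distance of `M ⊆ ℝ²`. -/
noncomputable def LorDist (M : Set (ℝ × ℝ)) (p q : ℝ × ℝ) : ℝ≥0∞ :=
  ⨆ (γ : ℝ → ℝ × ℝ) (_ : IsTimelikeCurveIn M γ p q), ENNReal.ofReal (Llen γ)


/-- The Minkowski plane with the closed segment `{1} × [1,2]` removed. -/
def Mslit : Set (ℝ × ℝ) := {p : ℝ × ℝ | ¬ (p.1 = 1 ∧ 1 ≤ p.2 ∧ p.2 ≤ 2)}


/-!
Since `√(v₂² - v₁²) ≤ v₂` for a future-directed timelike `v`, the fundamental theorem of calculus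
on each `C¹` piece bounds the Lorentzian length of any timelike curve from `p` to `q` by the time
difference `q₂ - p₂`. The vertical segment from `(0,0)` to `(0,4)` stays away from the slit and has
length exactly `4`.
-/

noncomputable def minkowskiNorm (v : ℝ × ℝ) : ℝ := √(v.2 ^ 2 - v.1 ^ 2)

theorem continuous_minkowskiNorm : Continuous minkowskiNorm := by
  unfold minkowskiNorm
  fun_prop

theorem minkowskiNorm_le_snd {v : ℝ × ℝ} (hv : FDTimelike v) : minkowskiNorm v ≤ v.2 := by
  have hsnd : 0 ≤ v.2 := (abs_nonneg v.1).trans hv.le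
  exact Real.sqrt_le_iff.mpr ⟨hsnd, by nlinarith [sq_nonneg v.1]⟩

theorem llen_eq_integral_minkowskiNorm (γ : ℝ → ℝ × ℝ) :
    Llen γ = ∫ s in (0 : ℝ)..1, minkowskiNorm (deriv γ s) :=
  rfl

theorem integral_minkowskiNorm_deriv_le {γ : ℝ → ℝ × ℝ} {a b : ℝ} (hab : a < b)
    (hγ : ContDiffOn ℝ 1 γ (Icc a b))
    (htl : ∀ s ∈ Icc a b, FDTimelike (derivWithin γ (Icc a b) s)) :
    IntervalIntegrable (fun s => minkowskiNorm (deriv γ s)) MeasureTheory.volume a b ∧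
      ∫ s in a..b, minkowskiNorm (deriv γ s) ≤ (γ b).2 - (γ a).2 := by
  set g := derivWithin γ (Icc a b)
  have hderiv : ∀ s ∈ Ioo a b, HasDerivAt γ (g s) s := fun s hs =>
    ((hγ.differentiableOn one_ne_zero s (Ioo_subset_Icc_self hs)).hasDerivWithinAt).hasDerivAt
      (Icc_mem_nhds hs.1 hs.2)
  have hg : ContinuousOn g (Icc a b) := hγ.continuousOn_derivWithin (uniqueDiffOn_Icc hab) le_rfl
  have hg_int {f : ℝ × ℝ → ℝ} (hf : Continuous f) :
      IntervalIntegrable (fun s => f (g s)) MeasureTheory.volume a b :=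
    (hf.comp_continuousOn hg).intervalIntegrable_of_Icc hab.le
  -- `Llen` integrates `deriv γ`, which agrees with the one-sided `g` only off the endpoints.
  have heq : EqOn (fun s => minkowskiNorm (deriv γ s)) (fun s => minkowskiNorm (g s)) (Ioo a b) :=
    fun s hs => congrArg minkowskiNorm (hderiv s hs).deriv
  refine ⟨(intervalIntegrable_congr_uIoo (uIoo_of_le hab.le ▸ heq)).mpr
    (hg_int continuous_minkowskiNorm), ?_⟩
  calc ∫ s in a..b, minkowskiNorm (deriv γ s)
      = ∫ s in a..b, minkowskiNorm (g s) := intervalIntegral.integral_congr_Ioo_of_le hab.le heq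
    _ ≤ ∫ s in a..b, (g s).2 :=
      intervalIntegral.integral_mono_on hab.le (hg_int continuous_minkowskiNorm)
        (hg_int continuous_snd) fun s hs => minkowskiNorm_le_snd (htl s hs)
    _ = (γ b).2 - (γ a).2 :=
      intervalIntegral.integral_eq_sub_of_hasDerivAt_of_le hab.le
        (continuous_snd.comp_continuousOn hγ.continuousOn)
        (fun s hs => hasFDerivAt_snd.comp_hasDerivAt s (hderiv s hs)) (hg_int continuous_snd)

theorem llen_le_sub_snd {M : Set (ℝ × ℝ)} {γ : ℝ → ℝ × ℝ} {p q : ℝ × ℝ}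
    (h : IsTimelikeCurveIn M γ p q) : Llen γ ≤ q.2 - p.2 := by
  obtain ⟨rfl, rfl, -, m, t, -, ht0, htm, hmono, hpieces⟩ := h
  have hpiece (j : ℕ) (hj : j < m) := integral_minkowskiNorm_deriv_le (hmono j hj)
    (hpieces j hj).1 (hpieces j hj).2
  calc Llen γ = ∑ j ∈ Finset.range m, ∫ s in t j..t (j + 1), minkowskiNorm (deriv γ s) := by
        rw [intervalIntegral.sum_integral_adjacent_intervals fun j hj => (hpiece j hj).1, ht0, htm,
          llen_eq_integral_minkowskiNorm]
    _ ≤ ∑ j ∈ Finset.range m, ((γ (t (j + 1))).2 - (γ (t j)).2) :=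
        Finset.sum_le_sum fun j hj => (hpiece j (Finset.mem_range.mp hj)).2
    _ = (γ 1).2 - (γ 0).2 := by rw [Finset.sum_range_sub (fun j => (γ (t j)).2), ht0, htm]

theorem lorDist_le_ofReal_sub_snd (M : Set (ℝ × ℝ)) (p q : ℝ × ℝ) :
    LorDist M p q ≤ ENNReal.ofReal (q.2 - p.2) :=
  iSup₂_le fun _ hγ => ENNReal.ofReal_le_ofReal (llen_le_sub_snd hγ)

theorem isTimelikeCurveIn_lineMap {M : Set (ℝ × ℝ)} {p q : ℝ × ℝ} (hpq : FDTimelike (q - p))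
    (hM : segment ℝ p q ⊆ M) : IsTimelikeCurveIn M (AffineMap.lineMap p q) p q := by
  refine ⟨AffineMap.lineMap_apply_zero p q, AffineMap.lineMap_apply_one p q, fun s hs => ?_,
    1, fun j => j, one_pos, Nat.cast_zero, Nat.cast_one, fun j _ => by simp, fun j hj => ?_⟩
  · exact hM (segment_eq_image_lineMap ℝ p q ▸ mem_image_of_mem _ hs)
  · obtain rfl : j = 0 := Nat.lt_one_iff.mp hj
    simp only [Nat.cast_zero, zero_add, Nat.cast_one]
    refine ⟨(AffineMap.contDiff_lineMap p q).contDiffOn, fun s hs => ?_⟩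
    rwa [AffineMap.hasDerivAt_lineMap.hasDerivWithinAt.derivWithin
      (uniqueDiffOn_Icc one_pos s hs)]

theorem llen_lineMap (p q : ℝ × ℝ) : Llen (AffineMap.lineMap p q) = minkowskiNorm (q - p) := by
  simp [llen_eq_integral_minkowskiNorm, AffineMap.hasDerivAt_lineMap.deriv]

theorem ofReal_minkowskiNorm_le_lorDist {M : Set (ℝ × ℝ)} {p q : ℝ × ℝ}
    (hpq : FDTimelike (q - p)) (hM : segment ℝ p q ⊆ M) :
    ENNReal.ofReal (minkowskiNorm (q - p)) ≤ LorDist M p q :=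
  llen_lineMap p q ▸ le_iSup₂_of_le (AffineMap.lineMap p q) (isTimelikeCurveIn_lineMap hpq hM)
    le_rfl

theorem segment_subset_mslit_of_fst_eq_zero {p q : ℝ × ℝ} (hp : p.1 = 0) (hq : q.1 = 0) :
    segment ℝ p q ⊆ Mslit := by
  have hconvex : Convex ℝ {x : ℝ × ℝ | x.1 = 0} :=
    convex_hyperplane (LinearMap.fst ℝ ℝ ℝ).isLinear 0
  intro x hx hslit
  have : x.1 = 0 := hconvex.segment_subset hp hq hx
  linarith [hslit.1]

/-- In the slit Minkowski plane of Example 2.2, `d((0,0),(0,4)) = 4`. -/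
theorem stmt_8 : LorDist Mslit ((0 : ℝ), (0 : ℝ)) ((0 : ℝ), (4 : ℝ)) = 4 := by
  refine le_antisymm ?_ ?_
  · simpa using lorDist_le_ofReal_sub_snd Mslit ((0 : ℝ), (0 : ℝ)) ((0 : ℝ), (4 : ℝ))
  · calc (4 : ℝ≥0∞) = ENNReal.ofReal (minkowskiNorm (((0 : ℝ), (4 : ℝ)) - ((0 : ℝ), (0 : ℝ)))) := by
          norm_num [minkowskiNorm, show √(16 : ℝ) = 4 by
            rw [show (16 : ℝ) = 4 ^ 2 by norm_num, Real.sqrt_sq (by norm_num)]]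
      _ ≤ LorDist Mslit ((0 : ℝ), (0 : ℝ)) ((0 : ℝ), (4 : ℝ)) :=
          ofReal_minkowskiNorm_le_lorDist (by norm_num [FDTimelike])
            (segment_subset_mslit_of_fst_eq_zero rfl rfl)
end

section
/- (From Example 2.2 of the paper.) Let M = ℝ² ∖ {(1, t) : 1 ≤ t ≤ 2} and V = {(1 + s, t + s) : t ∈ (1,2), s ∈ (0,∞)}. Then for every v ∈ V one has d_M((0,0), v) = 0, while inf_{δ > 0} d_M((0,−δ), v) > 0; in particular, the Lorentzian distance d_M : M × M → [0,∞] is discontinuous at ((0,0), v) for every v ∈ V. -/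
open Set
open scoped ENNReal

/-- The set `V = {(1+s, t+s) : t ∈ (1,2), s ∈ (0,∞)}`. -/
def Vshadow : Set (ℝ × ℝ) :=
  {v : ℝ × ℝ | ∃ t : ℝ, 1 < t ∧ t < 2 ∧ ∃ s : ℝ, 0 < s ∧ v = (1 + s, t + s)}

open Filter Topology

/-!
Along a future-directed timelike curve both `t + x` and `t - x` are strictly increasing, which
gives the cone inequality `|Δx| < Δt` between any two of its points. A curve from `(0,0)` to
`v = (1 + s, τ + s)` has to cross the line `x = 1`, and the cone inequality, applied from both
endpoints, puts the crossing at a height in `(1, τ)`, that is on the removed segment; hence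
`d((0,0), v) = 0`. From `(0,-δ)` one can instead pass just below the segment, through
`(1, 1 - δ/2)`, and the leg from there to `v` is longer than the Minkowski length of
`v - (1,1)`, a bound independent of `δ`. Letting `δ → 0` then contradicts continuity.
-/

lemma Icc_partition_induction {P : Set ℝ → Prop} {m : ℕ} {t : ℕ → ℝ} (hm : 0 < m)
    (ht : ∀ j < m, t j < t (j + 1)) (hpiece : ∀ j < m, P (Icc (t j) (t (j + 1))))
    (hunion : ∀ a b c, a ≤ b → b ≤ c → P (Icc a b) → P (Icc b c) → P (Icc a c)) :
    P (Icc (t 0) (t m)) := by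
  have key : ∀ k < m, t 0 ≤ t (k + 1) ∧ P (Icc (t 0) (t (k + 1))) := by
    intro k hk
    induction k with
    | zero => exact ⟨(ht 0 hm).le, hpiece 0 hm⟩
    | succ k ih =>
      obtain ⟨h₀, hP⟩ := ih (by omega)
      exact ⟨h₀.trans (ht _ hk).le, hunion _ _ _ h₀ (ht _ hk).le hP (hpiece _ hk)⟩
  obtain ⟨k, rfl⟩ := Nat.exists_eq_add_one_of_ne_zero hm.ne'
  exact (key k (by omega)).2

lemma strictMonoOn_comp_of_derivWithin_pos {E : Type*} [NormedAddCommGroup E] [NormedSpace ℝ E]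
    {f : ℝ → E} {a b : ℝ} (hf : DifferentiableOn ℝ f (Icc a b)) (ℓ : E →L[ℝ] ℝ)
    (hpos : ∀ x ∈ Ioo a b, 0 < ℓ (derivWithin f (Icc a b) x)) :
    StrictMonoOn (ℓ ∘ f) (Icc a b) := by
  refine strictMonoOn_of_hasDerivWithinAt_pos (convex_Icc a b)
    (ℓ.continuous.comp_continuousOn hf.continuousOn) (fun x hx => ?_)
    (fun x hx => hpos x (interior_Icc (a := a) ▸ hx))
  exact (ℓ.hasFDerivAt.comp_hasDerivWithinAt x
    (hf x (interior_subset hx)).hasDerivWithinAt).mono interior_subset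

namespace IsTimelikeCurveIn

variable {M : Set (ℝ × ℝ)} {γ : ℝ → ℝ × ℝ} {p q : ℝ × ℝ}

lemma continuousOn (h : IsTimelikeCurveIn M γ p q) : ContinuousOn γ (Icc 0 1) := by
  obtain ⟨-, -, -, m, t, hm, ht0, htm, ht, hpiece⟩ := h
  rw [← ht0, ← htm]
  refine Icc_partition_induction hm ht (fun j hj => (hpiece j hj).1.continuousOn) ?_
  intro a b c hab hbc h₁ h₂
  rw [← Icc_union_Icc_eq_Icc hab hbc]
  exact h₁.union_of_isClosed h₂ isClosed_Icc isClosed_Icc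

lemma strictMonoOn_comp (h : IsTimelikeCurveIn M γ p q) (ℓ : ℝ × ℝ →L[ℝ] ℝ)
    (hℓ : ∀ v, FDTimelike v → 0 < ℓ v) : StrictMonoOn (ℓ ∘ γ) (Icc 0 1) := by
  obtain ⟨-, -, -, m, t, hm, ht0, htm, ht, hpiece⟩ := h
  rw [← ht0, ← htm]
  refine Icc_partition_induction hm ht (fun j hj => strictMonoOn_comp_of_derivWithin_pos
    ((hpiece j hj).1.differentiableOn one_ne_zero) ℓ
    fun x hx => hℓ _ ((hpiece j hj).2 x (Ioo_subset_Icc_self hx))) ?_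
  intro a b c hab hbc h₁ h₂
  rw [← Icc_union_Icc_eq_Icc hab hbc]
  exact h₁.union h₂ (isGreatest_Icc hab) (isLeast_Icc hbc)

lemma abs_fst_sub_lt_snd_sub (h : IsTimelikeCurveIn M γ p q) {u w : ℝ} (hu : u ∈ Icc (0 : ℝ) 1)
    (hw : w ∈ Icc (0 : ℝ) 1) (huw : u < w) : |(γ w).1 - (γ u).1| < (γ w).2 - (γ u).2 := by
  have hplus := h.strictMonoOn_comp (.snd ℝ ℝ ℝ + .fst ℝ ℝ ℝ)
    (fun v hv => by
      simp only [add_apply, ContinuousLinearMap.coe_snd', ContinuousLinearMap.coe_fst']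
      linarith [abs_lt.1 hv]) hu hw huw
  have hminus := h.strictMonoOn_comp (.snd ℝ ℝ ℝ - .fst ℝ ℝ ℝ)
    (fun v hv => by
      simp only [sub_apply, ContinuousLinearMap.coe_snd', ContinuousLinearMap.coe_fst']
      linarith [abs_lt.1 hv]) hu hw huw
  simp only [Function.comp_apply, add_apply, sub_apply,
    ContinuousLinearMap.coe_fst', ContinuousLinearMap.coe_snd'] at hplus hminus
  rw [abs_lt]
  constructor <;> linarith

lemma ofReal_Llen_le_lorDist (h : IsTimelikeCurveIn M γ p q) :
    ENNReal.ofReal (Llen γ) ≤ LorDist M p q :=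
  le_iSup₂ (f := fun γ (_ : IsTimelikeCurveIn M γ p q) => ENNReal.ofReal (Llen γ)) γ h

end IsTimelikeCurveIn

lemma lorDist_eq_zero_of_forall_not_isTimelikeCurveIn {M : Set (ℝ × ℝ)} {p q : ℝ × ℝ}
    (h : ∀ γ, ¬ IsTimelikeCurveIn M γ p q) : LorDist M p q = 0 := by
  simp [LorDist, h]

lemma not_isTimelikeCurveIn_Mslit_zero {v : ℝ × ℝ} (hv : v ∈ Vshadow) (γ : ℝ → ℝ × ℝ) :
    ¬ IsTimelikeCurveIn Mslit γ (0, 0) v := by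
  obtain ⟨τ, hτ₁, hτ₂, s, hs, rfl⟩ := hv
  intro h
  obtain ⟨h₀, h₁, hM, -⟩ := id h
  obtain ⟨u, hu, hux⟩ : ∃ u ∈ Icc (0 : ℝ) 1, (γ u).1 = 1 :=
    intermediate_value_Icc zero_le_one h.continuousOn.fst
      (by rw [h₀, h₁]; exact ⟨zero_le_one, le_add_of_nonneg_right hs.le⟩)
  have hu₀ : 0 < u := hu.1.lt_of_ne (by rintro rfl; simp [h₀] at hux)
  have hu₁ : u < 1 := hu.2.lt_of_ne (by rintro rfl; simp [h₁, hs.ne'] at hux)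
  have below := h.abs_fst_sub_lt_snd_sub (left_mem_Icc.2 zero_le_one) hu hu₀
  have above := h.abs_fst_sub_lt_snd_sub hu (right_mem_Icc.2 zero_le_one) hu₁
  rw [h₀, hux] at below
  rw [h₁, hux] at above
  norm_num [abs_of_pos hs] at below above
  exact hM u hu ⟨hux, by linarith, by linarith⟩

noncomputable def lorentzNorm (v : ℝ × ℝ) : ℝ := Real.sqrt (v.2 ^ 2 - v.1 ^ 2)

lemma lorentzNorm_pos {v : ℝ × ℝ} (hv : FDTimelike v) : 0 < lorentzNorm v := by
  have := abs_lt.1 hv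
  exact Real.sqrt_pos.2 (by nlinarith)

lemma lorentzNorm_smul {c : ℝ} (hc : 0 ≤ c) (v : ℝ × ℝ) :
    lorentzNorm (c • v) = c * lorentzNorm v := by
  have : (c • v).2 ^ 2 - (c • v).1 ^ 2 = c ^ 2 * (v.2 ^ 2 - v.1 ^ 2) := by
    simp only [Prod.smul_fst, Prod.smul_snd, smul_eq_mul]
    ring
  rw [lorentzNorm, lorentzNorm, this, Real.sqrt_mul (sq_nonneg c), Real.sqrt_sq hc]

lemma FDTimelike.smul {c : ℝ} (hc : 0 < c) {v : ℝ × ℝ} (hv : FDTimelike v) :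
    FDTimelike (c • v) := by
  simp only [FDTimelike, Prod.smul_fst, Prod.smul_snd, smul_eq_mul, abs_mul, abs_of_pos hc]
  exact mul_lt_mul_of_pos_left hv hc

noncomputable def brokenLine (p a q : ℝ × ℝ) (u : ℝ) : ℝ × ℝ :=
  if u ≤ 1 / 2 then p + (2 * u) • (a - p) else a + (2 * u - 1) • (q - a)

namespace brokenLine

variable (p a q : ℝ × ℝ)

lemma eqOn_Iic : EqOn (brokenLine p a q) (fun u => p + (2 * u) • (a - p)) (Iic (1 / 2)) :=
  fun _ hu => if_pos hu

lemma eqOn_Ici : EqOn (brokenLine p a q) (fun u => a + (2 * u - 1) • (q - a)) (Ici (1 / 2)) := by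
  intro u hu
  rcases (mem_Ici.1 hu).eq_or_lt with rfl | hu
  · simp [brokenLine]
  · exact if_neg (not_le.2 hu)

lemma contDiffOn_Iic : ContDiffOn ℝ 1 (brokenLine p a q) (Iic (1 / 2)) :=
  (by fun_prop : ContDiff ℝ 1 fun u : ℝ => p + (2 * u) • (a - p)).contDiffOn.congr (eqOn_Iic p a q)

lemma contDiffOn_Ici : ContDiffOn ℝ 1 (brokenLine p a q) (Ici (1 / 2)) :=
  (by fun_prop : ContDiff ℝ 1 fun u : ℝ => a + (2 * u - 1) • (q - a)).contDiffOn.congr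
    (eqOn_Ici p a q)

lemma hasDerivWithinAt_Iic {u : ℝ} (hu : u ≤ 1 / 2) :
    HasDerivWithinAt (brokenLine p a q) ((2 : ℝ) • (a - p)) (Iic (1 / 2)) u := by
  have h := ((hasDerivAt_id u).const_mul 2).smul_const (a - p) |>.const_add p
  simp only [id, mul_one] at h
  exact h.hasDerivWithinAt.congr (eqOn_Iic p a q) (eqOn_Iic p a q hu)

lemma hasDerivWithinAt_Ici {u : ℝ} (hu : 1 / 2 ≤ u) :
    HasDerivWithinAt (brokenLine p a q) ((2 : ℝ) • (q - a)) (Ici (1 / 2)) u := by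
  have h := (((hasDerivAt_id u).const_mul 2).sub_const 1).smul_const (q - a) |>.const_add a
  simp only [id, mul_one] at h
  exact h.hasDerivWithinAt.congr (eqOn_Ici p a q) (eqOn_Ici p a q hu)

lemma isTimelikeCurveIn {M : Set (ℝ × ℝ)} (hp : FDTimelike (a - p)) (hq : FDTimelike (q - a))
    (hM : ∀ u ∈ Icc (0 : ℝ) 1, brokenLine p a q u ∈ M) :
    IsTimelikeCurveIn M (brokenLine p a q) p q := by
  refine ⟨by simp [brokenLine], by norm_num [brokenLine], hM, 2, fun j => j / 2, two_pos,
    by simp, by norm_num, fun j _ => by simp only [Nat.cast_add, Nat.cast_one]; linarith,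
    fun j hj => ?_⟩
  interval_cases j
  · norm_num
    refine ⟨(contDiffOn_Iic p a q).mono Icc_subset_Iic_self, fun u hu₀ hu₁ => ?_⟩
    rw [((hasDerivWithinAt_Iic p a q hu₁).mono Icc_subset_Iic_self).derivWithin
      (uniqueDiffOn_Icc (by norm_num) u ⟨hu₀, hu₁⟩)]
    exact hp.smul two_pos
  · norm_num
    refine ⟨(contDiffOn_Ici p a q).mono Icc_subset_Ici_self, fun u hu₀ hu₁ => ?_⟩
    rw [((hasDerivWithinAt_Ici p a q hu₀).mono Icc_subset_Ici_self).derivWithin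
      (uniqueDiffOn_Icc (by norm_num) u ⟨hu₀, hu₁⟩)]
    exact hq.smul two_pos

lemma Llen_eq : Llen (brokenLine p a q) = lorentzNorm (a - p) + lorentzNorm (q - a) := by
  set F := fun u => lorentzNorm (deriv (brokenLine p a q) u)
  have hleft : EqOn F (fun _ => lorentzNorm ((2 : ℝ) • (a - p))) (Ioo 0 (1 / 2)) := fun u hu => by
    simp only [F, ((hasDerivWithinAt_Iic p a q hu.2.le).hasDerivAt (Iic_mem_nhds hu.2)).deriv]
  have hright : EqOn F (fun _ => lorentzNorm ((2 : ℝ) • (q - a))) (Ioo (1 / 2) 1) := fun u hu => by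
    simp only [F, ((hasDerivWithinAt_Ici p a q hu.1.le).hasDerivAt (Ici_mem_nhds hu.1)).deriv]
  have hleft_int : IntervalIntegrable F MeasureTheory.volume 0 (1 / 2) :=
    intervalIntegrable_const.congr_uIoo (uIoo_of_le (by norm_num : (0 : ℝ) ≤ 1 / 2) ▸ hleft.symm)
  have hright_int : IntervalIntegrable F MeasureTheory.volume (1 / 2) 1 :=
    intervalIntegrable_const.congr_uIoo (uIoo_of_le (by norm_num : (1 / 2 : ℝ) ≤ 1) ▸ hright.symm)
  change ∫ u in (0 : ℝ)..1, F u = _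
  rw [← intervalIntegral.integral_add_adjacent_intervals hleft_int hright_int,
    intervalIntegral.integral_congr_Ioo_of_le (by norm_num) hleft,
    intervalIntegral.integral_congr_Ioo_of_le (by norm_num) hright,
    intervalIntegral.integral_const, intervalIntegral.integral_const,
    lorentzNorm_smul zero_le_two, lorentzNorm_smul zero_le_two]
  ring

end brokenLine

lemma mem_Mslit_of_fst_ne_one {x : ℝ × ℝ} (hx : x.1 ≠ 1) : x ∈ Mslit := fun h => hx h.1

lemma Vshadow_subset_Mslit : Vshadow ⊆ Mslit := by
  rintro _ ⟨τ, -, -, s, hs, rfl⟩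
  exact mem_Mslit_of_fst_ne_one (lt_add_of_pos_right 1 hs).ne'

lemma fdTimelike_sub_one_one {v : ℝ × ℝ} (hv : v ∈ Vshadow) : FDTimelike (v - (1, 1)) := by
  obtain ⟨τ, hτ₁, -, s, hs, rfl⟩ := hv
  simp only [FDTimelike, Prod.fst_sub, Prod.snd_sub, add_sub_cancel_left, abs_of_pos hs]
  linarith

lemma lorentzNorm_le_lorDist_Mslit {v : ℝ × ℝ} (hv : v ∈ Vshadow) {δ : ℝ} (hδ : 0 < δ) :
    ENNReal.ofReal (lorentzNorm (v - (1, 1))) ≤ LorDist Mslit (0, -δ) v := by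
  obtain ⟨τ, hτ₁, -, s, hs, rfl⟩ := hv
  have hcurve : IsTimelikeCurveIn Mslit (brokenLine (0, -δ) (1, 1 - δ / 2) (1 + s, τ + s))
      (0, -δ) (1 + s, τ + s) := by
    refine brokenLine.isTimelikeCurveIn _ _ _ ?_ ?_ fun u hu => ?_
    · norm_num [FDTimelike]
      linarith
    · simp only [FDTimelike, Prod.fst_sub, Prod.snd_sub, add_sub_cancel_left, abs_of_pos hs]
      linarith
    · rcases le_or_gt u (1 / 2) with hu' | hu'
      · rw [brokenLine.eqOn_Iic _ _ _ hu']
        rintro ⟨hx, hy, -⟩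
        simp only [Prod.mk_sub_mk, sub_zero, sub_neg_eq_add, Prod.smul_mk, smul_eq_mul, mul_one,
          Prod.mk_add_mk, zero_add, le_neg_add_iff_add_le] at hx hy
        nlinarith
      · rw [brokenLine.eqOn_Ici _ _ _ hu'.le]
        refine mem_Mslit_of_fst_ne_one (ne_of_gt ?_)
        simp only [Prod.fst_add, Prod.smul_fst, Prod.fst_sub, smul_eq_mul, add_sub_cancel_left]
        nlinarith
  refine le_trans (ENNReal.ofReal_le_ofReal ?_) hcurve.ofReal_Llen_le_lorDist
  rw [brokenLine.Llen_eq]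
  refine le_add_of_nonneg_of_le (Real.sqrt_nonneg _) (Real.sqrt_le_sqrt ?_)
  simp only [Prod.mk_sub_mk, add_sub_cancel_left, tsub_le_iff_right, sub_add_cancel]
  nlinarith

/-- For every `v ∈ V`: `d((0,0), v) = 0`, `inf_{δ>0} d((0,−δ), v) > 0`, and the
Lorentzian distance is discontinuous at `((0,0), v)`. -/
theorem stmt_10 : ∀ v ∈ Vshadow,
    LorDist Mslit ((0 : ℝ), (0 : ℝ)) v = 0 ∧
    (0 < ⨅ (δ : ℝ) (_ : 0 < δ), LorDist Mslit ((0 : ℝ), -δ) v) ∧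
    ¬ ContinuousWithinAt (fun pq : (ℝ × ℝ) × (ℝ × ℝ) => LorDist Mslit pq.1 pq.2)
        (Mslit ×ˢ Mslit) (((0 : ℝ), (0 : ℝ)), v) := by
  intro v hv
  have hzero : LorDist Mslit (0, 0) v = 0 :=
    lorDist_eq_zero_of_forall_not_isTimelikeCurveIn (not_isTimelikeCurveIn_Mslit_zero hv)
  set ε := ENNReal.ofReal (lorentzNorm (v - (1, 1)))
  have hε : 0 < ε := ENNReal.ofReal_pos.2 (lorentzNorm_pos (fdTimelike_sub_one_one hv))
  have hbound : ∀ δ > 0, ε ≤ LorDist Mslit (0, -δ) v := fun _ => lorentzNorm_le_lorDist_Mslit hv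
  refine ⟨hzero, hε.trans_le (le_iInf₂ hbound), fun hcont => ?_⟩
  have hlim : Tendsto (fun δ : ℝ => (((0 : ℝ), -δ), v)) (𝓝[>] 0)
      (𝓝[Mslit ×ˢ Mslit] (((0 : ℝ), (0 : ℝ)), v)) :=
    tendsto_nhdsWithin_of_tendsto_nhds_of_eventually_within _
      (((by fun_prop : Continuous fun δ : ℝ => (((0 : ℝ), -δ), v)).tendsto' 0 _ (by simp)).mono_left
        nhdsWithin_le_nhds)
      (Eventually.of_forall fun _ => ⟨mem_Mslit_of_fst_ne_one zero_ne_one, Vshadow_subset_Mslit hv⟩)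
  have hlim_dist := hcont.tendsto.comp hlim
  exact hε.not_ge (by
    simpa [hzero] using ge_of_tendsto hlim_dist (eventually_nhdsWithin_of_forall hbound))
end
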